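/- arXiv:2002.07909 — 6 statements merged into one kernel-verified Lean document; each statement's English description precedes it below -/
import Mathlib

section
/- Given 0 < ν < 1, real constants A, B, positive function p : {a+1, a+2, ...} → (0,∞), and functions q, h on {a+1, a+2, ...}, the initial value problem ∇[p(t+1)∇_{a*}^ν x(t+1)] + q(t)x(t) = h(t) for t ∈ ℕ_{a+1}, with x(a) = A and ∇x(a+1) = B, has a unique solution x : ℕ_a → ℝ. -/
open Finset

/-- Generalized rising function `x^{↑μ} = Γ(x+μ)/Γ(x)` (equals 0 when `Γ x = 0`,
matching the convention `0^{↑ν} = 0`). -/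
noncomputable def rise (x μ : ℝ) : ℝ := Real.Gamma (x + μ) / Real.Gamma x

/-- Nabla (backward) difference. -/
def nabla (f : ℤ → ℝ) (t : ℤ) : ℝ := f t - f (t - 1)

/-- Caputo nabla fractional difference of order `ν ∈ (0,1)` based at `a`. -/
noncomputable def caputo (ν : ℝ) (a : ℤ) (x : ℤ → ℝ) (t : ℤ) : ℝ :=
  ∑ τ ∈ Finset.Icc (a + 1) t,
    rise ((t - τ + 1 : ℤ) : ℝ) (-ν) / Real.Gamma (1 - ν) * nabla x τ

/-- Nabla fractional sum of order `ν` based at `a`. -/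
noncomputable def fsum (ν : ℝ) (a : ℤ) (f : ℤ → ℝ) (t : ℤ) : ℝ :=
  ∑ τ ∈ Finset.Icc (a + 1) t,
    rise ((t - τ + 1 : ℤ) : ℝ) (ν - 1) / Real.Gamma ν * f τ

/-- The self-adjoint operator `L_a x(t) = ∇[p(t+1)∇_{a*}^ν x(t+1)] + q(t)x(t)`. -/
noncomputable def Lop (ν : ℝ) (a : ℤ) (p q : ℤ → ℝ) (x : ℤ → ℝ) (t : ℤ) : ℝ :=
  (p (t + 1) * caputo ν a x (t + 1) - p t * caputo ν a x t) + q t * x t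

/-! The leading coefficient of `∇_{a*}^ν x(t+1)` is `1^{↑(-ν)} / Γ(1-ν) = 1`, so `L_a x(t) = h(t)`
can be solved for `x(t+1)` in terms of `x` on `[a, t]` as soon as `p(t+1) ≠ 0`. The initial
value problem is therefore a causal recurrence `x(t+1) = G t x`, and such a recurrence has exactly
one solution, built from the finite approximations `x|[a, a+n]`. -/

section CausalRecurrence

variable {α : Type*}

def IsCausalFrom (a : ℤ) (G : ℤ → (ℤ → α) → α) : Prop :=
  ∀ t, a ≤ t → ∀ f g, (∀ s, a ≤ s → s ≤ t → f s = g s) → G t f = G t g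

variable (a : ℤ) (G : ℤ → (ℤ → α) → α) (x₀ : α)

/-- Agrees with the solution of the recurrence on `[a, a + n]`. -/
def recurrenceApprox : ℕ → ℤ → α
  | 0, _ => x₀
  | n + 1, s => if s ≤ a + n then recurrenceApprox n s else G (a + n) (recurrenceApprox n)

lemma recurrenceApprox_of_le {n m : ℕ} (hnm : n ≤ m) {s : ℤ} (hs : s ≤ a + n) :
    recurrenceApprox a G x₀ m s = recurrenceApprox a G x₀ n s := by
  induction m, hnm using Nat.le_induction with
  | base => rfl
  | succ m hnm ih => rw [recurrenceApprox, if_pos (by omega), ih]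

def recurrenceSol (t : ℤ) : α := recurrenceApprox a G x₀ (t - a).toNat t

lemma recurrenceSol_eq_approx {n : ℕ} {s : ℤ} (has : a ≤ s) (hsn : s ≤ a + n) :
    recurrenceSol a G x₀ s = recurrenceApprox a G x₀ n s :=
  (recurrenceApprox_of_le a G x₀ (n := (s - a).toNat) (m := n) (by omega) (by omega)).symm

lemma recurrenceSol_base : recurrenceSol a G x₀ a = x₀ := by
  simp [recurrenceSol, recurrenceApprox]

lemma recurrenceSol_succ (hG : IsCausalFrom a G) {t : ℤ} (hat : a ≤ t) :
    recurrenceSol a G x₀ (t + 1) = G t (recurrenceSol a G x₀) := by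
  obtain ⟨n, rfl⟩ : ∃ n : ℕ, t = a + n := ⟨(t - a).toNat, by omega⟩
  rw [recurrenceSol_eq_approx a G x₀ (n := n + 1) (by omega) (by omega), recurrenceApprox,
    if_neg (by omega)]
  exact hG _ hat _ _ fun s has hsn => (recurrenceSol_eq_approx a G x₀ has hsn).symm

variable {a G}

lemma eq_of_isCausalFrom_recurrence (hG : IsCausalFrom a G) {x y : ℤ → α} (hxy : x a = y a)
    (hx : ∀ t, a ≤ t → x (t + 1) = G t x) (hy : ∀ t, a ≤ t → y (t + 1) = G t y) :
    ∀ t, a ≤ t → x t = y t := by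
  suffices H : ∀ t, a ≤ t → ∀ s, a ≤ s → s ≤ t → x s = y s from
    fun t ht => H t ht t ht le_rfl
  intro t hat
  induction t, hat using Int.leInduction with
  | base => intro s has hsa; rwa [le_antisymm hsa has]
  | succ t hat ih =>
    intro s has hst
    rcases (show s ≤ t ∨ s = t + 1 by omega) with hst | rfl
    · exact ih s has hst
    · rw [hx t hat, hy t hat, hG t hat x y ih]

end CausalRecurrence

section CaputoRecurrence

lemma nabla_add_one (x : ℤ → ℝ) (t : ℤ) : nabla x (t + 1) = x (t + 1) - x t := by
  simp [nabla]

lemma sum_mul_nabla_congr {a : ℤ} (w : ℤ → ℝ) {t : ℤ} {f g : ℤ → ℝ}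
    (hfg : ∀ s, a ≤ s → s ≤ t → f s = g s) :
    ∑ τ ∈ Icc (a + 1) t, w τ * nabla f τ = ∑ τ ∈ Icc (a + 1) t, w τ * nabla g τ := by
  refine sum_congr rfl fun τ hτ => ?_
  rw [mem_Icc] at hτ
  rw [nabla, nabla, hfg τ (by omega) (by omega), hfg (τ - 1) (by omega) (by omega)]

variable (ν : ℝ) (a : ℤ)

noncomputable def caputoMemory (x : ℤ → ℝ) (t : ℤ) : ℝ :=
  ∑ τ ∈ Icc (a + 1) t,
    rise ((t + 1 - τ + 1 : ℤ) : ℝ) (-ν) / Real.Gamma (1 - ν) * nabla x τ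

/-- `L_a x(t) = h(t)` solved for `∇x(t+1)`; at `t = a` the initial condition `∇x(a+1) = B`. -/
noncomputable def ivpNablaStep (p q h : ℤ → ℝ) (B : ℝ) (t : ℤ) (x : ℤ → ℝ) : ℝ :=
  if t = a then B
  else (h t - q t * x t + p t * caputo ν a x t) / p (t + 1) - caputoMemory ν a x t

lemma isCausalFrom_ivpNablaStep (p q h : ℤ → ℝ) (B : ℝ) :
    IsCausalFrom a fun t x => x t + ivpNablaStep ν a p q h B t x := by
  intro t hat f g hfg
  have hcaputo : caputo ν a f t = caputo ν a g t := sum_mul_nabla_congr _ hfg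
  have hmemory : caputoMemory ν a f t = caputoMemory ν a g t := sum_mul_nabla_congr _ hfg
  simp only [ivpNablaStep, hfg t hat le_rfl, hcaputo, hmemory]

variable {ν a}

lemma caputo_succ (hν1 : ν < 1) {t : ℤ} (hat : a ≤ t) (x : ℤ → ℝ) :
    caputo ν a x (t + 1) = nabla x (t + 1) + caputoMemory ν a x t := by
  have hΓ : Real.Gamma (1 - ν) ≠ 0 := (Real.Gamma_pos_of_pos (by linarith)).ne'
  have hIcc : Icc (a + 1) (t + 1) = insert (t + 1) (Icc (a + 1) t) := by
    ext s; simp only [mem_Icc, mem_insert]; omega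
  have hlead : rise ((t + 1 - (t + 1) + 1 : ℤ) : ℝ) (-ν) = Real.Gamma (1 - ν) := by
    simp [rise, sub_eq_add_neg]
  rw [caputo, hIcc, sum_insert (by simp), hlead, div_self hΓ, one_mul, caputoMemory]

lemma lop_eq_iff_nabla_eq (hν1 : ν < 1) {p : ℤ → ℝ} (q h : ℤ → ℝ) {t : ℤ} (hat : a ≤ t)
    (hp : p (t + 1) ≠ 0) (x : ℤ → ℝ) :
    Lop ν a p q x t = h t ↔
      nabla x (t + 1) =
        (h t - q t * x t + p t * caputo ν a x t) / p (t + 1) - caputoMemory ν a x t := by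
  rw [Lop, caputo_succ hν1 hat, eq_sub_iff_add_eq, eq_div_iff hp]
  constructor <;> intro H <;> linarith

lemma ivp_iff_recurrence (hν1 : ν < 1) {p : ℤ → ℝ} (hp : ∀ t, a + 1 ≤ t → 0 < p t)
    (q h : ℤ → ℝ) (B : ℝ) (x : ℤ → ℝ) :
    (nabla x (a + 1) = B ∧ ∀ t, a + 1 ≤ t → Lop ν a p q x t = h t) ↔
      ∀ t, a ≤ t → x (t + 1) = x t + ivpNablaStep ν a p q h B t x := by
  simp only [← sub_eq_iff_eq_add', ← nabla_add_one]
  constructor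
  · rintro ⟨hB, hL⟩ t hat
    rcases hat.eq_or_lt with rfl | hat
    · simpa [ivpNablaStep] using hB
    · rw [ivpNablaStep, if_neg hat.ne']
      exact (lop_eq_iff_nabla_eq hν1 q h hat.le (hp (t + 1) (by omega)).ne' x).1 (hL t hat)
  · intro H
    refine ⟨by simpa [ivpNablaStep] using H a le_rfl, fun t hat => ?_⟩
    have hstep := H t (by omega)
    rw [ivpNablaStep, if_neg (by omega)] at hstep
    exact (lop_eq_iff_nabla_eq hν1 q h (by omega) (hp (t + 1) (by omega)).ne' x).2 hstep

end CaputoRecurrence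

theorem selfadjoint_ivp_exists_unique_general (ν : ℝ) (hν1 : ν < 1) (a : ℤ)
    (A B : ℝ) (p q h : ℤ → ℝ) (hp : ∀ t, a + 1 ≤ t → 0 < p t) :
    ∃ x : ℤ → ℝ,
      (x a = A ∧ nabla x (a + 1) = B ∧ ∀ t, a + 1 ≤ t → Lop ν a p q x t = h t) ∧
      ∀ y : ℤ → ℝ,
        (y a = A ∧ nabla y (a + 1) = B ∧ ∀ t, a + 1 ≤ t → Lop ν a p q y t = h t) →
        ∀ t, a ≤ t → y t = x t := by
  have hG := isCausalFrom_ivpNablaStep ν a p q h B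
  set x := recurrenceSol a (fun t f => f t + ivpNablaStep ν a p q h B t f) A
  have hx : ∀ t, a ≤ t → x (t + 1) = x t + ivpNablaStep ν a p q h B t x :=
    fun t hat => recurrenceSol_succ a _ A hG hat
  refine ⟨x, ⟨recurrenceSol_base a _ A, (ivp_iff_recurrence hν1 hp q h B x).2 hx⟩, ?_⟩
  rintro y ⟨hya, hy⟩
  exact eq_of_isCausalFrom_recurrence hG (hya.trans (recurrenceSol_base a _ A).symm)
    ((ivp_iff_recurrence hν1 hp q h B y).1 hy) hx

theorem selfadjoint_ivp_exists_unique (ν : ℝ) (hν : 0 < ν) (hν1 : ν < 1) (a : ℤ)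
    (A B : ℝ) (p q h : ℤ → ℝ) (hp : ∀ t, a + 1 ≤ t → 0 < p t) :
    ∃ x : ℤ → ℝ,
      (x a = A ∧ nabla x (a + 1) = B ∧ ∀ t, a + 1 ≤ t → Lop ν a p q x t = h t) ∧
      ∀ y : ℤ → ℝ,
        (y a = A ∧ nabla y (a + 1) = B ∧ ∀ t, a + 1 ≤ t → Lop ν a p q y t = h t) →
        ∀ t, a ≤ t → y t = x t :=
  selfadjoint_ivp_exists_unique_general ν hν1 a A B p q h hp
end

section
/- For μ, ν > 0 and f : ℕ_a → ℝ, the fractional sums compose: ∇_a^{-ν}∇_a^{-μ} f(t) = ∇_a^{-ν-μ} f(t) for all t ∈ ℕ_a. -/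
open Finset

/-!
The kernel of `fsum ν` at lag `n = t - τ` is `(n+1)^{↑(ν-1)}/Γ(ν) = Γ(ν+n)/(n! Γ(ν))`, which is the
multiset coefficient `Ring.multichoose ν n`, the coefficient of `xⁿ` in `(1-x)^{-ν}`. So `fsum ν`
is a causal convolution with this sequence, and composing two of them convolves the kernels.
The identity `(1-x)^{-ν} (1-x)^{-μ} = (1-x)^{-(ν+μ)}` is the Vandermonde identity for
`multichoose`, which follows from the one for `choose` via `multichoose r k = (-1)ᵏ choose (-r) k`.
-/

theorem Ring.multichoose_add {R : Type*} [Ring R] [BinomialRing R] {r s : R} (h : Commute r s)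
    (n : ℕ) :
    Ring.multichoose (r + s) n =
      ∑ p ∈ antidiagonal n, Ring.multichoose r p.1 * Ring.multichoose s p.2 := by
  have hmulti : ∀ (x : R) (k : ℕ), Ring.multichoose x k = Int.negOnePow k • Ring.choose (-x) k := by
    intro x k
    rw [Ring.choose_neg', smul_smul, ← Int.negOnePow_add, Int.negOnePow_even _ (by simp), one_smul]
  rw [hmulti, neg_add, Ring.add_choose_eq n h.neg_left.neg_right, smul_sum]
  refine sum_congr rfl fun p hp => ?_
  rw [HasAntidiagonal.mem_antidiagonal] at hp
  rw [hmulti, hmulti, smul_mul_smul_comm, ← Int.negOnePow_add, ← Nat.cast_add, hp]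

theorem Real.Gamma_add_nat_eq_ascPochhammer_mul {x : ℝ} (hx : ∀ k : ℕ, x ≠ -k) (n : ℕ) :
    Real.Gamma (x + n) = (ascPochhammer ℝ n).eval x * Real.Gamma x := by
  induction n with
  | zero => simp
  | succ n ih =>
    have hxn : x + n ≠ 0 := fun h => hx n (eq_neg_of_add_eq_zero_left h)
    rw [Nat.cast_succ, ← add_assoc, Real.Gamma_add_one hxn, ih, ascPochhammer_succ_eval]
    ring

theorem rise_natCast_add_one_div_Gamma {ν : ℝ} (hν : 0 < ν) (n : ℕ) :
    rise (n + 1) (ν - 1) / Real.Gamma ν = Ring.multichoose ν n := by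
  have hν' : ∀ k : ℕ, ν ≠ -k := fun k h => by linarith [(k.cast_nonneg : (0 : ℝ) ≤ k)]
  have hfact := Ring.factorial_nsmul_multichoose_eq_ascPochhammer ν n
  rw [Polynomial.ascPochhammer_smeval_eq_eval, nsmul_eq_mul] at hfact
  rw [rise, Real.Gamma_nat_eq_factorial, show (n : ℝ) + 1 + (ν - 1) = ν + n by ring,
    Real.Gamma_add_nat_eq_ascPochhammer_mul hν', ← hfact]
  field_simp [(Real.Gamma_pos_of_pos hν).ne']

theorem fsum_eq_sum_multichoose {ν : ℝ} (hν : 0 < ν) (a : ℤ) (f : ℤ → ℝ) (t : ℤ) :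
    fsum ν a f t = ∑ τ ∈ Icc (a + 1) t, Ring.multichoose ν (t - τ).toNat * f τ := by
  refine sum_congr rfl fun τ hτ => ?_
  have hcast : ((t - τ + 1 : ℤ) : ℝ) = ((t - τ).toNat : ℕ) + 1 := by
    rw [mem_Icc] at hτ
    exact_mod_cast (by omega : t - τ + 1 = ((t - τ).toNat : ℤ) + 1)
  rw [hcast, rise_natCast_add_one_div_Gamma hν]

theorem Finset.sum_Icc_sum_Icc_comm {α M : Type*} [Preorder α] [LocallyFiniteOrder α]
    [AddCommMonoid M] (a b : α) (g : α → α → M) :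
    ∑ y ∈ Icc a b, ∑ x ∈ Icc a y, g y x = ∑ x ∈ Icc a b, ∑ y ∈ Icc x b, g y x :=
  sum_comm' fun y x => by
    simp only [mem_Icc]
    exact ⟨fun ⟨⟨_, hyb⟩, hax, hxy⟩ => ⟨⟨hxy, hyb⟩, hax, hxy.trans hyb⟩,
      fun ⟨⟨hxy, hyb⟩, hax, _⟩ => ⟨⟨hax.trans hxy, hyb⟩, hax, hxy⟩⟩

theorem sum_Icc_multichoose_mul_multichoose {R : Type*} [Ring R] [BinomialRing R] {r s : R}
    (h : Commute r s) {a b : ℤ} (hab : a ≤ b) :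
    ∑ x ∈ Icc a b, Ring.multichoose r (b - x).toNat * Ring.multichoose s (x - a).toNat =
      Ring.multichoose (r + s) (b - a).toNat := by
  rw [Ring.multichoose_add h]
  refine sum_nbij' (fun x => ((b - x).toNat, (x - a).toNat)) (fun p => b - p.1)
    (fun x hx => ?_) (fun p hp => ?_) (fun x hx => ?_) (fun p hp => ?_) (fun _ _ => rfl)
  · rw [mem_Icc] at hx
    rw [HasAntidiagonal.mem_antidiagonal]
    omega
  · rw [HasAntidiagonal.mem_antidiagonal] at hp
    rw [mem_Icc]
    omega
  · rw [mem_Icc] at hx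
    omega
  · rw [HasAntidiagonal.mem_antidiagonal] at hp
    ext <;> simp only <;> omega

theorem fsum_comp (μ ν : ℝ) (hμ : 0 < μ) (hν : 0 < ν) (a : ℤ) (f : ℤ → ℝ) :
    ∀ t, a ≤ t → fsum ν a (fsum μ a f) t = fsum (ν + μ) a f t := by
  intro t _
  simp only [fsum_eq_sum_multichoose hν, fsum_eq_sum_multichoose hμ,
    fsum_eq_sum_multichoose (add_pos hν hμ), mul_sum]
  rw [sum_Icc_sum_Icc_comm]
  refine sum_congr rfl fun s hs => ?_
  rw [← sum_Icc_multichoose_mul_multichoose (Commute.all ν μ) (mem_Icc.mp hs).2, sum_mul]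
  simp only [mul_assoc]
end

section
/- If x₁, x₂ : ℕ_a → ℝ are linearly independent solutions of the homogeneous self-adjoint equation L_a x(t) = 0 on ℕ_{a+1}, then every solution x of L_a x(t) = 0 can be written uniquely as x(t) = c₁x₁(t) + c₂x₂(t) for constants c₁, c₂ ∈ ℝ. -/
open Finset

/-!
`L_a` is linear, so its solutions form a subspace, and a solution is determined on `ℕ_a` by
its values at `a` and `a + 1`: if these vanish, the equation at `t` reads
`p(t+1) x(t+1) = 0`, because the Caputo kernel at lag one is `1`. Hence the initial-value map
is injective on solutions, the Casoratian of two independent solutions at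
`a, a + 1` is nonzero, and Cramer's rule gives the coefficients.
-/

section TwoInitialValues

variable {ι K : Type*} [Field K] {s : Set ι} {x₁ x₂ : ι → K}

theorem eq_zero_of_forall_mem_combination_eq_zero
    (hli : (∀ c : K, ∃ t ∈ s, x₁ t ≠ c * x₂ t) ∧ (∀ c : K, ∃ t ∈ s, x₂ t ≠ c * x₁ t))
    {c₁ c₂ : K} (h : ∀ t ∈ s, c₁ * x₁ t + c₂ * x₂ t = 0) : c₁ = 0 ∧ c₂ = 0 := by
  have hc₁ : c₁ = 0 := by
    by_contra hc₁
    obtain ⟨t, ht, hne⟩ := hli.1 (-c₂ / c₁)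
    apply hne
    field_simp
    linear_combination h t ht
  refine ⟨hc₁, ?_⟩
  by_contra hc₂
  obtain ⟨t, ht, hne⟩ := hli.2 0
  apply hne
  rw [zero_mul]
  simpa [hc₁, hc₂] using h t ht

variable {S : Submodule K (ι → K)} {i₀ i₁ : ι}
  (hS : ∀ y ∈ S, y i₀ = 0 → y i₁ = 0 → Set.EqOn y 0 s)
include hS

theorem casoratian_ne_zero (hx₁ : x₁ ∈ S) (hx₂ : x₂ ∈ S)
    (hli : (∀ c : K, ∃ t ∈ s, x₁ t ≠ c * x₂ t) ∧ (∀ c : K, ∃ t ∈ s, x₂ t ≠ c * x₁ t)) :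
    x₁ i₀ * x₂ i₁ - x₂ i₀ * x₁ i₁ ≠ 0 := by
  intro hdet
  rw [← Matrix.det_fin_two_of] at hdet
  obtain ⟨v, hv, hMv⟩ := Matrix.exists_mulVec_eq_zero_iff.2 hdet
  have hinit := congr_fun hMv
  simp only [Fin.forall_fin_two, Matrix.mulVec, dotProduct, Fin.sum_univ_two,
    Matrix.of_apply, Matrix.cons_val', Matrix.cons_val_zero, Matrix.cons_val_one,
    Matrix.empty_val', Matrix.cons_val_fin_one, Pi.zero_apply] at hinit
  have hy := hS (v 0 • x₁ + v 1 • x₂) (S.add_mem (S.smul_mem _ hx₁) (S.smul_mem _ hx₂))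
    (by simp only [Pi.add_apply, Pi.smul_apply, smul_eq_mul]; linear_combination hinit.1)
    (by simp only [Pi.add_apply, Pi.smul_apply, smul_eq_mul]; linear_combination hinit.2)
  obtain ⟨h0, h1⟩ := eq_zero_of_forall_mem_combination_eq_zero hli
    (fun t ht => by simpa using hy ht)
  exact hv (by ext i; fin_cases i <;> simp [h0, h1])

theorem existsUnique_combination (hx₁ : x₁ ∈ S) (hx₂ : x₂ ∈ S)
    (hli : (∀ c : K, ∃ t ∈ s, x₁ t ≠ c * x₂ t) ∧ (∀ c : K, ∃ t ∈ s, x₂ t ≠ c * x₁ t))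
    {x : ι → K} (hx : x ∈ S) :
    ∃! c : K × K, ∀ t ∈ s, x t = c.1 * x₁ t + c.2 * x₂ t := by
  have hD := casoratian_ne_zero hS hx₁ hx₂ hli
  set D := x₁ i₀ * x₂ i₁ - x₂ i₀ * x₁ i₁
  -- Cramer's rule for the initial values at `i₀, i₁`
  set c : K × K := ((x i₀ * x₂ i₁ - x₂ i₀ * x i₁) / D, (x₁ i₀ * x i₁ - x i₀ * x₁ i₁) / D)
  have hc : ∀ t ∈ s, x t = c.1 * x₁ t + c.2 * x₂ t := by
    have hy := hS (x - (c.1 • x₁ + c.2 • x₂))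
      (S.sub_mem hx (S.add_mem (S.smul_mem _ hx₁) (S.smul_mem _ hx₂)))
      (by simp only [Pi.sub_apply, Pi.add_apply, Pi.smul_apply, smul_eq_mul, c]
          field_simp; ring)
      (by simp only [Pi.sub_apply, Pi.add_apply, Pi.smul_apply, smul_eq_mul, c]
          field_simp; ring)
    intro t ht
    simpa [sub_eq_zero] using hy ht
  refine ⟨c, hc, fun d hd => ?_⟩
  obtain ⟨h1, h2⟩ := eq_zero_of_forall_mem_combination_eq_zero hli (c₁ := d.1 - c.1)
    (c₂ := d.2 - c.2) (fun t ht => by linear_combination hc t ht - hd t ht)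
  exact Prod.ext (sub_eq_zero.1 h1) (sub_eq_zero.1 h2)

end TwoInitialValues

section Caputo

variable (ν : ℝ) (a : ℤ)

theorem rise_one_neg : rise ((1 : ℤ) : ℝ) (-ν) = Real.Gamma (1 - ν) := by
  simp [rise, sub_eq_add_neg]

theorem caputo_add (x y : ℤ → ℝ) (t : ℤ) :
    caputo ν a (x + y) t = caputo ν a x t + caputo ν a y t := by
  simp only [caputo, ← sum_add_distrib]
  exact sum_congr rfl fun τ _ => by simp only [nabla, Pi.add_apply]; ring

theorem caputo_smul (c : ℝ) (x : ℤ → ℝ) (t : ℤ) :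
    caputo ν a (c • x) t = c * caputo ν a x t := by
  simp only [caputo, mul_sum]
  exact sum_congr rfl fun τ _ => by simp only [nabla, Pi.smul_apply, smul_eq_mul]; ring

variable {p q : ℤ → ℝ}

theorem Lop_add (x y : ℤ → ℝ) (t : ℤ) :
    Lop ν a p q (x + y) t = Lop ν a p q x t + Lop ν a p q y t := by
  simp only [Lop, caputo_add, Pi.add_apply]; ring

theorem Lop_smul (c : ℝ) (x : ℤ → ℝ) (t : ℤ) :
    Lop ν a p q (c • x) t = c * Lop ν a p q x t := by
  simp only [Lop, caputo_smul, Pi.smul_apply, smul_eq_mul]; ring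

def solutions (p q : ℤ → ℝ) : Submodule ℝ (ℤ → ℝ) where
  carrier := {x | ∀ t, a + 1 ≤ t → Lop ν a p q x t = 0}
  add_mem' hx hy t ht := by simp [Lop_add, hx t ht, hy t ht]
  zero_mem' t _ := by simp [Lop, caputo, nabla]
  smul_mem' c x hx t ht := by simp [Lop_smul, hx t ht]

variable {ν a}

theorem sum_mul_nabla_eq_zero (w : ℤ → ℝ) {y : ℤ → ℝ} {t : ℤ}
    (hy : Set.EqOn y 0 (Set.Icc a t)) : ∑ τ ∈ Icc (a + 1) t, w τ * nabla y τ = 0 := by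
  refine sum_eq_zero fun τ hτ => ?_
  rw [mem_Icc] at hτ
  rw [nabla, hy ⟨by omega, hτ.2⟩, hy ⟨by omega, by omega⟩]
  simp

theorem caputo_eq_zero_of_eqOn_zero {y : ℤ → ℝ} {t : ℤ} (hy : Set.EqOn y 0 (Set.Icc a t)) :
    caputo ν a y t = 0 :=
  sum_mul_nabla_eq_zero _ hy

theorem caputo_add_one_of_eqOn_zero (hΓ : Real.Gamma (1 - ν) ≠ 0) {y : ℤ → ℝ} {t : ℤ}
    (ht : a ≤ t) (hy : Set.EqOn y 0 (Set.Icc a t)) :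
    caputo ν a y (t + 1) = y (t + 1) := by
  rw [caputo, ← insert_Icc_right_eq_Icc_add_one (by omega), sum_insert (by simp),
    sum_mul_nabla_eq_zero _ hy, add_zero, sub_self, zero_add, rise_one_neg, div_self hΓ,
    one_mul, nabla, add_sub_cancel_right, hy ⟨ht, le_rfl⟩, Pi.zero_apply, sub_zero]

theorem Lop_eq_of_eqOn_zero (hΓ : Real.Gamma (1 - ν) ≠ 0) {y : ℤ → ℝ} {t : ℤ}
    (ht : a ≤ t) (hy : Set.EqOn y 0 (Set.Icc a t)) :
    Lop ν a p q y t = p (t + 1) * y (t + 1) := by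
  rw [Lop, caputo_add_one_of_eqOn_zero hΓ ht hy, caputo_eq_zero_of_eqOn_zero hy,
    hy ⟨ht, le_rfl⟩, Pi.zero_apply]
  ring

theorem eqOn_zero_of_mem_solutions (hΓ : Real.Gamma (1 - ν) ≠ 0)
    (hp : ∀ t, a + 1 ≤ t → 0 < p t) {y : ℤ → ℝ} (hy : y ∈ solutions ν a p q)
    (h₀ : y a = 0) (h₁ : y (a + 1) = 0) : Set.EqOn y 0 (Set.Ici a) := by
  suffices key : ∀ n, a + 1 ≤ n → Set.EqOn y 0 (Set.Icc a n) from
    fun t ht => key (max t (a + 1)) (le_max_right _ _) ⟨ht, le_max_left _ _⟩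
  refine Int.leInduction ?_ (fun n hn ih => ?_)
  · rintro s ⟨hs₀, hs₁⟩
    obtain rfl | rfl : s = a ∨ s = a + 1 := by omega
    exacts [h₀, h₁]
  · have hnext : y (n + 1) = 0 := by
      have h := hy n hn
      rw [Lop_eq_of_eqOn_zero hΓ (by omega) ih] at h
      exact (mul_eq_zero.1 h).resolve_left (hp (n + 1) (by omega)).ne'
    rintro s ⟨hs₀, hs₁⟩
    obtain hs | rfl : s ≤ n ∨ s = n + 1 := by omega
    exacts [ih ⟨hs₀, hs⟩, hnext]

end Caputo

theorem general_solution_homogeneous_general (ν : ℝ) (hν1 : ν < 1) (a : ℤ)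
    (p q : ℤ → ℝ) (hp : ∀ t, a + 1 ≤ t → 0 < p t) (x₁ x₂ : ℤ → ℝ)
    (h1 : ∀ t, a + 1 ≤ t → Lop ν a p q x₁ t = 0)
    (h2 : ∀ t, a + 1 ≤ t → Lop ν a p q x₂ t = 0)
    (hli : (∀ c : ℝ, ∃ t, a ≤ t ∧ x₁ t ≠ c * x₂ t) ∧
           (∀ c : ℝ, ∃ t, a ≤ t ∧ x₂ t ≠ c * x₁ t))
    (x : ℤ → ℝ) (hx : ∀ t, a + 1 ≤ t → Lop ν a p q x t = 0) :
    ∃! c : ℝ × ℝ, ∀ t, a ≤ t → x t = c.1 * x₁ t + c.2 * x₂ t := by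
  have hΓ : Real.Gamma (1 - ν) ≠ 0 := (Real.Gamma_pos_of_pos (sub_pos.2 hν1)).ne'
  exact existsUnique_combination (s := Set.Ici a) (S := solutions ν a p q)
    (fun _ hy => eqOn_zero_of_mem_solutions hΓ hp hy) h1 h2 hli hx

theorem general_solution_homogeneous (ν : ℝ) (hν : 0 < ν) (hν1 : ν < 1) (a : ℤ)
    (p q : ℤ → ℝ) (hp : ∀ t, a + 1 ≤ t → 0 < p t) (x₁ x₂ : ℤ → ℝ)
    (h1 : ∀ t, a + 1 ≤ t → Lop ν a p q x₁ t = 0)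
    (h2 : ∀ t, a + 1 ≤ t → Lop ν a p q x₂ t = 0)
    (hli : (∀ c : ℝ, ∃ t, a ≤ t ∧ x₁ t ≠ c * x₂ t) ∧
           (∀ c : ℝ, ∃ t, a ≤ t ∧ x₂ t ≠ c * x₁ t))
    (x : ℤ → ℝ) (hx : ∀ t, a + 1 ≤ t → Lop ν a p q x t = 0) :
    ∃! c : ℝ × ℝ, ∀ t, a ≤ t → x t = c.1 * x₁ t + c.2 * x₂ t :=
  general_solution_homogeneous_general ν hν1 a p q hp x₁ x₂ h1 h2 hli x hx
end

section
/- Let x(t,s) be the Cauchy function for L_a, i.e., for each fixed s ∈ ℕ_a, t ↦ x(t,s) satisfies L_s x(·,s) = 0 on ℕ_{s+1}, x(s,s) = 0, and ∇x(s+1,s) = 1/p(s+1). Then y(t) := Σ_{s=a+1}^{t} x(t,s)h(s) solves the IVP L_a y(t) = h(t) for t ∈ ℕ_{a+1}, y(a) = 0, ∇y(a+1) = 0. -/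
/-!
Since `x(t,t) = 0`, `∇y(τ) = Σ_{s<τ} ∇x(τ,s) h(s)`; exchanging this sum with the one defining
the Caputo difference gives `∇_{a*}^ν y(t) = Σ_{s ≤ t} ∇_{s*}^ν x(·,s)(t) h(s)`, and hence
`L_a y(t) = Σ_{s=a+1}^{t} L_s x(·,s)(t) h(s)`. The terms with `s < t` vanish because `x(·,s)` is a
Cauchy function, and since the Caputo kernel at lag one is `1^{↑(-ν)}/Γ(1-ν) = 1`, the term `s = t`
is `p(t+1) ∇x(t+1,t) + q(t) x(t,t) = 1`.
-/

open Finset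

section Caputo

variable {ν : ℝ} {a : ℤ} {x : ℤ → ℝ}

theorem caputo_eq_zero_of_le {t : ℤ} (ht : t ≤ a) : caputo ν a x t = 0 := by
  rw [caputo, Icc_eq_empty (by omega), sum_empty]

theorem caputo_add_one_self (hν : ν < 1) : caputo ν a x (a + 1) = nabla x (a + 1) := by
  have hΓ : Real.Gamma (1 - ν) ≠ 0 := (Real.Gamma_pos_of_pos (by linarith)).ne'
  have hrise : rise 1 (-ν) = Real.Gamma (1 - ν) := by
    rw [rise, Real.Gamma_one, div_one, ← sub_eq_add_neg]
  rw [caputo, Icc_self, sum_singleton, sub_self, zero_add, Int.cast_one, hrise,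
    div_self hΓ, one_mul]

theorem Lop_self (hν : ν < 1) {p q : ℤ → ℝ} :
    Lop ν a p q x a = p (a + 1) * nabla x (a + 1) + q a * x a := by
  rw [Lop, caputo_add_one_self hν, caputo_eq_zero_of_le le_rfl, mul_zero, sub_zero]

end Caputo

section KernelSum

variable {a : ℤ} {x : ℤ → ℤ → ℝ} {h : ℤ → ℝ}

theorem nabla_kernel_sum (hx : ∀ s, a + 1 ≤ s → x s s = 0) (τ : ℤ) :
    nabla (fun t => ∑ s ∈ Icc (a + 1) t, x t s * h s) τ
      = ∑ s ∈ Ico (a + 1) τ, nabla (fun t => x t s) τ * h s := by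
  have hdiag : ∑ s ∈ Icc (a + 1) τ, x τ s * h s = ∑ s ∈ Ico (a + 1) τ, x τ s * h s := by
    refine (sum_subset Ico_subset_Icc_self fun s hs hs' => ?_).symm
    obtain rfl : s = τ := by simp only [mem_Icc, mem_Ico] at hs hs'; omega
    rw [hx s (mem_Icc.1 hs).1, zero_mul]
  simp only [nabla, hdiag, Icc_sub_one_right_eq_Ico, ← sum_sub_distrib, sub_mul]

theorem caputo_kernel_sum {ν : ℝ} (hx : ∀ s, a + 1 ≤ s → x s s = 0) (T : ℤ) :
    caputo ν a (fun t => ∑ s ∈ Icc (a + 1) t, x t s * h s) T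
      = ∑ s ∈ Icc (a + 1) T, caputo ν s (fun t => x t s) T * h s := by
  simp only [caputo, nabla_kernel_sum hx, mul_sum, sum_mul]
  rw [sum_comm' (t' := Icc (a + 1) T) (s' := fun s => Icc (s + 1) T)
    (by intro τ s; simp only [mem_Icc, mem_Ico]; omega)]
  refine sum_congr rfl fun s _ => sum_congr rfl fun τ _ => ?_
  ring

theorem Lop_kernel_sum {ν : ℝ} {p q : ℤ → ℝ} (hx : ∀ s, a + 1 ≤ s → x s s = 0) (t : ℤ) :
    Lop ν a p q (fun t => ∑ s ∈ Icc (a + 1) t, x t s * h s) t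
      = ∑ s ∈ Icc (a + 1) t, Lop ν s p q (fun τ => x τ s) t * h s := by
  have htop : ∑ s ∈ Icc (a + 1) (t + 1), caputo ν s (fun τ => x τ s) (t + 1) * h s
      = ∑ s ∈ Icc (a + 1) t, caputo ν s (fun τ => x τ s) (t + 1) * h s := by
    refine (sum_subset (Icc_subset_Icc_right (by omega)) fun s hs hs' => ?_).symm
    rw [caputo_eq_zero_of_le (a := s) (by simp only [mem_Icc] at hs hs'; omega), zero_mul]
  simp only [Lop, caputo_kernel_sum hx, htop, mul_sum, ← sum_sub_distrib,
    ← sum_add_distrib]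
  refine sum_congr rfl fun s _ => ?_
  ring

end KernelSum

theorem variation_of_constants_general (ν : ℝ) (hν1 : ν < 1) (a : ℤ)
    (p q h : ℤ → ℝ) (hp : ∀ t, a + 1 ≤ t → 0 < p t)
    (x : ℤ → ℤ → ℝ)
    (hC : ∀ s, a ≤ s →
      (∀ t, s + 1 ≤ t → Lop ν s p q (fun τ => x τ s) t = 0) ∧
      x s s = 0 ∧ nabla (fun τ => x τ s) (s + 1) = 1 / p (s + 1))
    (y : ℤ → ℝ) (hy : ∀ t, y t = ∑ s ∈ Finset.Icc (a + 1) t, x t s * h s) :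
    y a = 0 ∧ nabla y (a + 1) = 0 ∧ ∀ t, a + 1 ≤ t → Lop ν a p q y t = h t := by
  obtain rfl : y = fun t => ∑ s ∈ Icc (a + 1) t, x t s * h s := funext hy
  have hdiag : ∀ s, a + 1 ≤ s → x s s = 0 := fun s hs => (hC s (by omega)).2.1
  refine ⟨by simp, by simp [nabla_kernel_sum hdiag], fun t ht => ?_⟩
  have hself : Lop ν t p q (fun τ => x τ t) t = 1 := by
    rw [Lop_self hν1, (hC t (by omega)).2.2, (hC t (by omega)).2.1,
      mul_one_div_cancel (hp (t + 1) (by omega)).ne', mul_zero, add_zero]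
  rw [Lop_kernel_sum hdiag, sum_eq_single_of_mem t (by simp [ht]), hself, one_mul]
  intro s hs hst
  obtain ⟨hs₁, hs₂⟩ := mem_Icc.1 hs
  rw [(hC s (by omega)).1 t (by omega), zero_mul]

theorem variation_of_constants (ν : ℝ) (hν : 0 < ν) (hν1 : ν < 1) (a : ℤ)
    (p q h : ℤ → ℝ) (hp : ∀ t, a + 1 ≤ t → 0 < p t)
    (x : ℤ → ℤ → ℝ)
    (hC : ∀ s, a ≤ s →
      (∀ t, s + 1 ≤ t → Lop ν s p q (fun τ => x τ s) t = 0) ∧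
      x s s = 0 ∧ nabla (fun τ => x τ s) (s + 1) = 1 / p (s + 1))
    (y : ℤ → ℝ) (hy : ∀ t, y t = ∑ s ∈ Finset.Icc (a + 1) t, x t s * h s) :
    y a = 0 ∧ nabla y (a + 1) = 0 ∧ ∀ t, a + 1 ≤ t → Lop ν a p q y t = h t :=
  variation_of_constants_general ν hν1 a p q h hp x hC y hy
end

section
/- The Green's function for the conjugate BVP ∇∇_{a*}^ν x(t+1) = 0, x(a)=x(b)=0 is G(t,s) = −(b−s)^{↑ν}(t−a)^{↑ν}/(Γ(1+ν)(b−a)^{↑ν}) for a ≤ t ≤ s ≤ b, and G(t,s) = −(b−s)^{↑ν}(t−a)^{↑ν}/(Γ(1+ν)(b−a)^{↑ν}) + (t−s)^{↑ν}/Γ(1+ν) for a ≤ s ≤ t ≤ b; that is, for each fixed s ∈ ℕ_a^b, u(t,s) := −(b−s)^{↑ν}(t−a)^{↑ν}/(Γ(1+ν)(b−a)^{↑ν}) satisfies ∇∇_{a*}^ν u(t+1,s) = 0 on ℕ_{a+1}^{b-1}, u(a,s) = 0, and u(b,s) = −(b−s)^{↑ν}/Γ(1+ν). -/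
open Finset

/-- The function  in the Green's function for the conjugate BVP. -/
noncomputable def uFun (ν : ℝ) (a b s : ℤ) (t : ℤ) : ℝ :=
  -(rise ((b - s : ℤ) : ℝ) ν * rise ((t - a : ℤ) : ℝ) ν) /
    (Real.Gamma (1 + ν) * rise ((b - a : ℤ) : ℝ) ν)

/-!
The Caputo difference of `(t - a)^{↑ν}` is the constant `Γ(1 + ν)` on `t ≥ a + 1`; since `u(·, s)`
is a constant multiple of `(t - a)^{↑ν}`, its Caputo difference has zero backward difference there.
By the power rule `∇ t^{↑ν} = ν t^{↑(ν-1)}`, the Caputo difference at `a + n` is `ν / Γ(1 - ν)`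
times the convolution `∑_{i<n} (n - i)^{↑(-ν)} (i + 1)^{↑(ν-1)}`. This convolution does not depend
on `n` (a Chu–Vandermonde identity): summing the contiguous relation
`x (x+1)^{↑μ} y^{↑κ} + y x^{↑μ} (y+1)^{↑κ} = (x + y + μ + κ) x^{↑μ} y^{↑κ}`, with `μ + κ = -1`,
over `x + y = n + 1` gives `n · conv (n + 1) = n · conv n`, and `conv 1 = Γ(1 - ν) Γ(ν)`.
-/

open Real

-- Also true at `x = 0`, where `rise 0 μ = 0` because `Γ 0 = 0`.
lemma rise_eq_mul_div_Gamma (x μ : ℝ) : rise x μ = x * Gamma (x + μ) / Gamma (x + 1) := by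
  rcases eq_or_ne x 0 with rfl | hx
  · simp [rise]
  · rw [rise, Gamma_add_one hx, mul_div_mul_left _ _ hx]

lemma rise_add_one {x μ : ℝ} (h : x + μ ≠ 0) :
    rise (x + 1) μ = (x + μ) * Gamma (x + μ) / Gamma (x + 1) := by
  rw [rise, add_right_comm, Gamma_add_one h]

lemma rise_add_one_sub_rise {x ν : ℝ} (h : x + ν ≠ 0) :
    rise (x + 1) ν - rise x ν = ν * rise (x + 1) (ν - 1) := by
  rw [rise_add_one h, rise_eq_mul_div_Gamma, rise, show x + 1 + (ν - 1) = x + ν by ring]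
  ring

lemma mul_rise_add_one {x μ : ℝ} (h : x + μ ≠ 0) :
    x * rise (x + 1) μ = (x + μ) * rise x μ := by
  rw [rise_add_one h, rise_eq_mul_div_Gamma]
  ring

lemma rise_mul_rise_contiguous {x y μ κ : ℝ} (hx : x + μ ≠ 0) (hy : y + κ ≠ 0) :
    x * (rise (x + 1) μ * rise y κ) + y * (rise x μ * rise (y + 1) κ) =
      (x + y + μ + κ) * (rise x μ * rise y κ) := by
  linear_combination rise y κ * mul_rise_add_one hx + rise x μ * mul_rise_add_one hy

noncomputable def riseConv (ν : ℝ) (n : ℕ) : ℝ :=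
  ∑ i ∈ range n, rise ((n : ℝ) - i) (-ν) * rise ((i : ℝ) + 1) (ν - 1)

lemma riseConv_succ {ν : ℝ} (hν : 0 < ν) (hν1 : ν < 1) {n : ℕ} (hn : n ≠ 0) :
    riseConv ν (n + 1) = riseConv ν n := by
  set T : ℝ → ℝ → ℝ := fun x y => rise x (-ν) * rise y (ν - 1)
  have contiguous : ∀ i ∈ range n, (n - i : ℝ) * T (n - i + 1) (i + 1) +
      (i + 1 : ℝ) * T (n - i) (i + 1 + 1) = n * T (n - i) (i + 1) := by
    intro i hi
    have hi : (i : ℝ) + 1 ≤ n := by exact_mod_cast mem_range.mp hi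
    linear_combination rise_mul_rise_contiguous (x := n - i) (y := i + 1) (μ := -ν)
      (κ := ν - 1) (by linarith) (by linarith)
  have weighted : (n : ℝ) * riseConv ν (n + 1) = n * riseConv ν n := by
    calc (n : ℝ) * riseConv ν (n + 1)
        = ∑ i ∈ range (n + 1), ((n - i : ℝ) * T (n - i + 1) (i + 1) +
            (i : ℝ) * T (n - i + 1) (i + 1)) := by
          rw [riseConv, mul_sum]
          refine sum_congr rfl fun i _ => ?_
          simp only [T]
          push_cast
          ring_nf
      _ = ∑ i ∈ range n, ((n - i : ℝ) * T (n - i + 1) (i + 1) +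
            (i + 1 : ℝ) * T (n - i) (i + 1 + 1)) := by
          -- the term `i = n` of the first sum and the term `i = 0` of the second vanish
          rw [sum_add_distrib, sum_range_succ, sum_range_succ' (fun i : ℕ => (i : ℝ) * _),
            sum_add_distrib]
          push_cast
          ring_nf
      _ = n * riseConv ν n := by rw [sum_congr rfl contiguous, riseConv, mul_sum]
  exact mul_left_cancel₀ (Nat.cast_ne_zero.mpr hn) weighted

lemma riseConv_one (ν : ℝ) : riseConv ν 1 = Gamma (1 - ν) * Gamma ν := by
  simp [riseConv, rise, sub_eq_add_neg]

lemma riseConv_eq {ν : ℝ} (hν : 0 < ν) (hν1 : ν < 1) {n : ℕ} (hn : 1 ≤ n) :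
    riseConv ν n = Gamma (1 - ν) * Gamma ν := by
  induction n, hn using Nat.le_induction with
  | base => exact riseConv_one ν
  | succ n hn ih => rw [riseConv_succ hν hν1 (by omega), ih]

lemma caputo_const_mul (ν : ℝ) (a : ℤ) (c : ℝ) (x : ℤ → ℝ) (t : ℤ) :
    caputo ν a (fun τ => c * x τ) t = c * caputo ν a x t := by
  simp only [caputo, nabla, mul_sum]
  exact sum_congr rfl fun _ _ => by ring

lemma caputo_rise_sub_add_natCast {ν : ℝ} (hν : 0 < ν) (a : ℤ) (n : ℕ) :
    caputo ν a (fun τ => rise ((τ - a : ℤ) : ℝ) ν) (a + n) =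
      ν / Gamma (1 - ν) * riseConv ν n := by
  rw [caputo, Int.Icc_eq_finset_map, show (a + n + 1 - (a + 1)).toNat = n by omega, sum_map,
    riseConv, mul_sum]
  refine sum_congr rfl fun i _ => ?_
  have hi : (i : ℝ) + ν ≠ 0 := by positivity
  simp only [nabla, Function.Embedding.trans_apply, Nat.castEmbedding_apply,
    addLeftEmbedding_apply]
  push_cast
  rw [show a + 1 + (i : ℝ) - a = i + 1 by ring, show a + 1 + (i : ℝ) - 1 - a = i by ring,
    rise_add_one_sub_rise hi, show (a : ℝ) + n - (a + 1 + i) + 1 = n - i by ring]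
  ring

theorem caputo_rise_sub_eq_Gamma {ν : ℝ} (hν : 0 < ν) (hν1 : ν < 1) {a t : ℤ} (ht : a + 1 ≤ t) :
    caputo ν a (fun τ => rise ((τ - a : ℤ) : ℝ) ν) t = Gamma (1 + ν) := by
  obtain ⟨n, rfl⟩ : ∃ n : ℕ, t = a + n := ⟨(t - a).toNat, by omega⟩
  have hΓ : Gamma (1 - ν) ≠ 0 := (Gamma_pos_of_pos (by linarith)).ne'
  rw [caputo_rise_sub_add_natCast hν, riseConv_eq hν hν1 (by omega), add_comm,
    Gamma_add_one hν.ne']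
  field_simp

theorem greens_function_conjugate_general (ν : ℝ) (hν : 0 < ν) (hν1 : ν < 1) (a b : ℤ)
    (hab : a < b) (s : ℤ) :
    (∀ t, a + 1 ≤ t → t ≤ b - 1 →
      caputo ν a (uFun ν a b s) (t + 1) - caputo ν a (uFun ν a b s) t = 0) ∧
    uFun ν a b s a = 0 ∧
    uFun ν a b s b = -(rise ((b - s : ℤ) : ℝ) ν) / Real.Gamma (1 + ν) := by
  set c := -rise ((b - s : ℤ) : ℝ) ν / (Gamma (1 + ν) * rise ((b - a : ℤ) : ℝ) ν)
  have hu : uFun ν a b s = fun t => c * rise ((t - a : ℤ) : ℝ) ν := by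
    funext t
    simp only [uFun, c]
    ring
  have hba : (0 : ℝ) < (b - a : ℤ) := by exact_mod_cast sub_pos.mpr hab
  have hrise : rise ((b - a : ℤ) : ℝ) ν ≠ 0 :=
    (div_pos (Gamma_pos_of_pos (by linarith)) (Gamma_pos_of_pos hba)).ne'
  have hΓ : Gamma (1 + ν) ≠ 0 := (Gamma_pos_of_pos (by linarith)).ne'
  refine ⟨fun t ht _ => ?_, by simp [uFun, rise], ?_⟩
  · rw [hu, caputo_const_mul, caputo_const_mul, caputo_rise_sub_eq_Gamma hν hν1 ht,
      caputo_rise_sub_eq_Gamma hν hν1 (by omega), sub_self]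
  · simp only [uFun]
    field_simp

theorem greens_function_conjugate (ν : ℝ) (hν : 0 < ν) (hν1 : ν < 1) (a b : ℤ)
    (hab : a < b) (s : ℤ) (hs₁ : a ≤ s) (hs₂ : s ≤ b) :
    (∀ t, a + 1 ≤ t → t ≤ b - 1 →
      caputo ν a (uFun ν a b s) (t + 1) - caputo ν a (uFun ν a b s) t = 0) ∧
    uFun ν a b s a = 0 ∧
    uFun ν a b s b = -(rise ((b - s : ℤ) : ℝ) ν) / Real.Gamma (1 + ν) :=
  greens_function_conjugate_general ν hν hν1 a b hab s
end

section
/- The Green's function G(t,s) for the BVP ∇∇_{a*}^ν x(t+1)=0, x(a)=x(b)=0 satisfies G(t,s) ≥ −((b−a)/4)·Γ(b−a+1)/(Γ(ν+1)Γ(b−a+ν)) for all t, s ∈ ℕ_a^b. -/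
open Finset

/-- Green function for the conjugate BVP `∇∇_{a*}^ν x(t+1) = 0`, `x(a)=x(b)=0`. -/
noncomputable def Grn (ν : ℝ) (a b t s : ℤ) : ℝ :=
  if t ≤ s then
    -(rise ((b - s : ℤ) : ℝ) ν * rise ((t - a : ℤ) : ℝ) ν) /
      (Real.Gamma (1 + ν) * rise ((b - a : ℤ) : ℝ) ν)
  else
    -(rise ((b - s : ℤ) : ℝ) ν * rise ((t - a : ℤ) : ℝ) ν) /
      (Real.Gamma (1 + ν) * rise ((b - a : ℤ) : ℝ) ν)
      + rise ((t - s : ℤ) : ℝ) ν / Real.Gamma (1 + ν)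

/-!
Multiplying by `Γ(1+ν) (b-a)^{↑ν} > 0` and using `Γ(b-a+1) = (b-a) Γ(b-a)`, the claim becomes
`Γ(1+ν) (b-a)^{↑ν} G(t,s) ≥ -(b-a)²/4`. Log-convexity of `Γ` gives `m^{↑ν} ≤ m^ν ≤ m`, and
`(m+1)^{↑ν} - m^{↑ν} = ν m^{↑ν} / m` shows that `m ↦ m^{↑ν}` increases with steps at most `ν`.
For `t ≤ s` the scaled `G` is then at least `-(b-s)(t-a) ≥ -(t-a)(b-t)`. For `s < t` write
`(b-s)^{↑ν}(t-a)^{↑ν} - (t-s)^{↑ν}(b-a)^{↑ν}`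
`= (t-a)^{↑ν} ((b-s)^{↑ν} - (t-s)^{↑ν}) + (t-s)^{↑ν} ((t-a)^{↑ν} - (b-a)^{↑ν}) ≤ (t-a)(b-t)`.
In both cases AM–GM, `(t-a)(b-t) ≤ (b-a)²/4`, finishes.
-/

open Real

section rise

variable {ν x : ℝ}

lemma rise_zero : rise 0 ν = 0 := by
  simp [rise]

lemma rise_pos (hx : 0 < x) (hxν : 0 < x + ν) : 0 < rise x ν :=
  div_pos (Gamma_pos_of_pos hxν) (Gamma_pos_of_pos hx)

lemma rise_add_one_sub (hx : x ≠ 0) (hxν : x + ν ≠ 0) :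
    rise (x + 1) ν - rise x ν = ν * rise x ν / x := by
  have hΓ : Gamma (x + 1 + ν) = (x + ν) * Gamma (x + ν) := by
    rw [add_right_comm, Gamma_add_one hxν]
  rw [rise, rise, hΓ, Gamma_add_one hx, mul_div_mul_comm]
  by_cases hx0 : Gamma x = 0
  · simp [hx0]
  · field_simp
    ring

lemma rise_le_rpow (hx : 0 < x) (hν : 0 < ν) (hν1 : ν < 1) : rise x ν ≤ x ^ ν := by
  have hΓx := Gamma_pos_of_pos hx
  have hconv := Gamma_mul_add_mul_le_rpow_Gamma_mul_rpow_Gamma hx (by linarith : 0 < x + 1)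
    (sub_pos.2 hν1) hν (sub_add_cancel 1 ν)
  rw [show (1 - ν) * x + ν * (x + 1) = x + ν by ring, Gamma_add_one hx.ne',
    mul_rpow hx.le hΓx.le, ← mul_assoc, mul_comm _ (x ^ ν), mul_assoc, ← rpow_add hΓx,
    sub_add_cancel, rpow_one] at hconv
  exact (div_le_iff₀ hΓx).2 hconv

lemma rise_le_self (hx : 1 ≤ x) (hν : 0 < ν) (hν1 : ν < 1) : rise x ν ≤ x :=
  (rise_le_rpow (by linarith) hν hν1).trans (rpow_le_self_of_one_le hx hν1.le)

lemma rise_intCast_pos {m : ℤ} (hm : 0 < m) (hν : 0 ≤ ν) : 0 < rise m ν := by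
  have : (0 : ℝ) < m := by exact_mod_cast hm
  exact rise_pos this (by linarith)

lemma rise_intCast_nonneg {m : ℤ} (hm : 0 ≤ m) (hν : 0 ≤ ν) : 0 ≤ rise m ν := by
  rcases hm.eq_or_lt with rfl | hm
  · simp [rise_zero]
  · exact (rise_intCast_pos hm hν).le

lemma rise_intCast_le_self {m : ℤ} (hm : 0 ≤ m) (hν : 0 < ν) (hν1 : ν < 1) :
    rise m ν ≤ m := by
  rcases hm.eq_or_lt with rfl | hm
  · simp [rise_zero]
  · exact rise_le_self (by exact_mod_cast hm) hν hν1

lemma rise_intCast_mono {m k : ℤ} (hm : 1 ≤ m) (hmk : m ≤ k) (hν : 0 ≤ ν) :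
    rise m ν ≤ rise k ν := by
  induction k, hmk using Int.leInduction with
  | base => rfl
  | succ j hj ih =>
    have hj : (1 : ℝ) ≤ j := by exact_mod_cast hm.trans hj
    have hstep := rise_add_one_sub (ν := ν) (by linarith : (j : ℝ) ≠ 0) (by linarith)
    have : 0 ≤ ν * rise j ν / j :=
      div_nonneg (mul_nonneg hν (rise_pos (by linarith) (by linarith)).le) (by linarith)
    push_cast
    linarith

lemma rise_intCast_sub_le {m k : ℤ} (hm : 1 ≤ m) (hmk : m ≤ k) (hν : 0 < ν) (hν1 : ν < 1) :
    rise k ν - rise m ν ≤ ν * (k - m) := by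
  induction k, hmk using Int.leInduction with
  | base => simp
  | succ j hj ih =>
    have hj : (1 : ℝ) ≤ j := by exact_mod_cast hm.trans hj
    have hstep := rise_add_one_sub (ν := ν) (by linarith : (j : ℝ) ≠ 0) (by linarith)
    have : ν * rise j ν / j ≤ ν := by
      rw [div_le_iff₀ (by linarith)]
      exact mul_le_mul_of_nonneg_left (rise_le_self hj hν hν1) hν.le
    push_cast
    linarith

end rise

lemma Gamma_add_one_div_eq_div_rise {n : ℝ} (hn : 0 < n) (ν : ℝ) :
    Gamma (n + 1) / (Gamma (ν + 1) * Gamma (n + ν)) = n / (Gamma (1 + ν) * rise n ν) := by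
  have := (Gamma_pos_of_pos hn).ne'
  rw [rise, Gamma_add_one hn.ne', add_comm ν, mul_div_assoc', div_div_eq_mul_div]

section Green

variable {ν : ℝ} {a b t s : ℤ}

lemma rise_mul_rise_le_of_le (hν : 0 < ν) (hν1 : ν < 1) (hat : a ≤ t) (hts : t ≤ s)
    (hsb : s ≤ b) :
    rise ((b - s : ℤ) : ℝ) ν * rise ((t - a : ℤ) : ℝ) ν ≤ ((t - a : ℤ) : ℝ) * ((b - t : ℤ) : ℝ) :=
  calc _ ≤ ((b - s : ℤ) : ℝ) * ((t - a : ℤ) : ℝ) :=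
        mul_le_mul (rise_intCast_le_self (by omega) hν hν1)
          (rise_intCast_le_self (by omega) hν hν1)
          (rise_intCast_nonneg (by omega) hν.le) (by exact_mod_cast (by omega : 0 ≤ b - s))
    _ ≤ ((t - a : ℤ) : ℝ) * ((b - t : ℤ) : ℝ) := by
        rw [mul_comm]
        exact_mod_cast mul_le_mul_of_nonneg_left (by omega) (by omega : 0 ≤ t - a)

lemma rise_mul_rise_sub_le_of_lt (hν : 0 < ν) (hν1 : ν < 1) (has : a ≤ s) (hst : s < t)
    (htb : t ≤ b) :
    rise ((b - s : ℤ) : ℝ) ν * rise ((t - a : ℤ) : ℝ) ν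
        - rise ((t - s : ℤ) : ℝ) ν * rise ((b - a : ℤ) : ℝ) ν
      ≤ ((t - a : ℤ) : ℝ) * ((b - t : ℤ) : ℝ) := by
  have hts : (1 : ℤ) ≤ t - s := by omega
  have hincr : rise ((b - s : ℤ) : ℝ) ν - rise ((t - s : ℤ) : ℝ) ν ≤ ((b - t : ℤ) : ℝ) :=
    calc _ ≤ ν * (((b - s : ℤ) : ℝ) - ((t - s : ℤ) : ℝ)) :=
          rise_intCast_sub_le hts (by omega) hν hν1
      _ ≤ ((b - t : ℤ) : ℝ) := by
          have : ((b - s : ℤ) : ℝ) - ((t - s : ℤ) : ℝ) = ((b - t : ℤ) : ℝ) := by push_cast; ring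
          rw [this]
          exact mul_le_of_le_one_left (by exact_mod_cast (by omega : 0 ≤ b - t)) hν1.le
  calc _ = rise ((t - a : ℤ) : ℝ) ν * (rise ((b - s : ℤ) : ℝ) ν - rise ((t - s : ℤ) : ℝ) ν)
        + rise ((t - s : ℤ) : ℝ) ν * (rise ((t - a : ℤ) : ℝ) ν - rise ((b - a : ℤ) : ℝ) ν) := by
        ring
    _ ≤ ((t - a : ℤ) : ℝ) * ((b - t : ℤ) : ℝ) + 0 := by
        gcongr ?_ + ?_
        · exact mul_le_mul (rise_intCast_le_self (by omega) hν hν1) hincr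
            (sub_nonneg.2 (rise_intCast_mono hts (by omega) hν.le))
            (by exact_mod_cast (by omega : 0 ≤ t - a))
        · exact mul_nonpos_of_nonneg_of_nonpos (rise_intCast_nonneg (by omega) hν.le)
            (sub_nonpos.2 (rise_intCast_mono (by omega) (by omega) hν.le))
    _ = ((t - a : ℤ) : ℝ) * ((b - t : ℤ) : ℝ) := add_zero _

lemma neg_mul_div_le_Grn (hν : 0 < ν) (hν1 : ν < 1) (hab : a < b) (hat : a ≤ t) (htb : t ≤ b)
    (has : a ≤ s) (hsb : s ≤ b) :
    -(((t - a : ℤ) : ℝ) * ((b - t : ℤ) : ℝ)) / (Gamma (1 + ν) * rise ((b - a : ℤ) : ℝ) ν)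
      ≤ Grn ν a b t s := by
  have hΓ : 0 < Gamma (1 + ν) := Gamma_pos_of_pos (by linarith)
  have hR : 0 < rise ((b - a : ℤ) : ℝ) ν := rise_intCast_pos (by omega) hν.le
  have hD := mul_pos hΓ hR
  unfold Grn
  split_ifs with hts
  · rw [div_le_div_iff_of_pos_right hD, neg_le_neg_iff]
    exact rise_mul_rise_le_of_le hν hν1 hat hts hsb
  · rw [← mul_div_mul_right (rise ((t - s : ℤ) : ℝ) ν) _ hR.ne', ← add_div,
      div_le_div_iff_of_pos_right hD]
    linarith [rise_mul_rise_sub_le_of_lt hν hν1 has (not_le.1 hts) htb]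

end Green

theorem greens_function_lower_bound (ν : ℝ) (hν : 0 < ν) (hν1 : ν < 1) (a b : ℤ)
    (hab : a < b) :
    ∀ t s : ℤ, a ≤ t → t ≤ b → a ≤ s → s ≤ b →
      Grn ν a b t s ≥ -(((b : ℝ) - a) / 4) *
        (Real.Gamma ((b : ℝ) - a + 1) /
          (Real.Gamma (ν + 1) * Real.Gamma ((b : ℝ) - a + ν))) := by
  intro t s hat htb has hsb
  have hba : (0 : ℝ) < b - a := by exact_mod_cast sub_pos.2 hab
  have hD : 0 < Gamma (1 + ν) * rise ((b - a : ℤ) : ℝ) ν :=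
    mul_pos (Gamma_pos_of_pos (by linarith)) (rise_intCast_pos (by omega) hν.le)
  have hamgm : 4 * ((t - a) * (b - t)) ≤ (b - a) ^ 2 := by
    simpa [mul_assoc] using four_mul_le_sq_add (t - a) (b - t)
  calc -(((b : ℝ) - a) / 4) *
          (Gamma ((b : ℝ) - a + 1) / (Gamma (ν + 1) * Gamma ((b : ℝ) - a + ν)))
      = -(((b - a : ℤ) : ℝ) ^ 2 / 4) / (Gamma (1 + ν) * rise ((b - a : ℤ) : ℝ) ν) := by
        rw [Gamma_add_one_div_eq_div_rise hba, Int.cast_sub]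
        ring
    _ ≤ -(((t - a : ℤ) : ℝ) * ((b - t : ℤ) : ℝ)) / (Gamma (1 + ν) * rise ((b - a : ℤ) : ℝ) ν) := by
        gcongr
        rw [le_div_iff₀' four_pos]
        exact_mod_cast hamgm
    _ ≤ Grn ν a b t s := neg_mul_div_le_Grn hν hν1 hab hat htb has hsb
end
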